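/- arXiv:2510.09219 — 3 statements merged into one kernel-verified Lean document; each statement's English description precedes it below -/
import Mathlib

section
/- Let A be a commutative unital ring, u a unit of A, and (a_1,…,a_n) ∈ A^n. If n = 2l is even then K_{2l}(u·a_1, u^{−1}·a_2, u·a_3, …, u·a_{2l−1}, u^{−1}·a_{2l}) = K_{2l}(a_1,…,a_{2l}). If n = 2l+1 is odd then K_{2l+1}(u·a_1, u^{−1}·a_2, …, u·a_{2l−1}, u^{−1}·a_{2l}, u·a_{2l+1}) = u·K_{2l+1}(a_1,…,a_{2l+1}). -/
namespace Quiddity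

variable {A : Type*} [CommRing A]

/-- `mMat [a₁, …, aₙ]` is the matrix product `[[aₙ,-1],[1,0]] ⋯ [[a₁,-1],[1,0]]`. -/
def mMat : List A → Matrix (Fin 2) (Fin 2) A
  | [] => 1
  | a :: t => mMat t * !![a, -1; 1, 0]

/-- Continuant: `cont [] = K₀ = 1`, `cont [a] = K₁(a) = a`, and the continuant recursion. -/
def cont : List A → A
  | [] => 1
  | [a] => a
  | a :: b :: t => a * cont (b :: t) - cont t

/-- A λ-quiddity is a tuple with `Mₙ(a₁,…,aₙ) = ± Id`. -/
def IsQuiddity (l : List A) : Prop := mMat l = 1 ∨ mMat l = -1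

/-- The sum `⊕` of two tuples (meaningful for tuples of length ≥ 2):
`(a₁,…,aₘ) ⊕ (b₁,…,b_l) = (a₁+b_l, a₂,…,a_{m−1}, aₘ+b₁, b₂,…,b_{l−1})`. -/
def oplus (la lb : List A) : List A :=
  (la.headD 0 + lb.getLastD 0) ::
    (la.tail.dropLast ++ (la.getLastD 0 + lb.headD 0) :: lb.tail.dropLast)

/-- Two tuples are equivalent if one is a cyclic permutation of the other or of its
reversal. -/
def TupleEquiv (l l' : List A) : Prop :=
  List.IsRotated l l' ∨ List.IsRotated l.reverse l'

/-- A λ-quiddity `c` is reducible if `c ∼ a ⊕ b` with `b` a λ-quiddity and both of size ≥ 3. -/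
def QuiddityReducible (c : List A) : Prop :=
  ∃ a b : List A, 3 ≤ a.length ∧ 3 ≤ b.length ∧ IsQuiddity b ∧ TupleEquiv c (oplus a b)

/-- `(a, b, a, b, …, a, b)` with `k` repetitions of the pair `(a, b)` (size `2k`). -/
def dynList : ℕ → A → A → List A
  | 0, _, _ => []
  | k + 1, a, b => a :: b :: dynList k a b

/-- `(u, v, v, u, v, v, …, u, v, v)` with `k` repetitions of the block `(u, v, v)`
(size `3k`). -/
def triList : ℕ → A → A → List A
  | 0, _, _ => []
  | k + 1, a, b => a :: b :: b :: triList k a b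

end Quiddity

namespace Quiddity

variable {A : Type*} [CommRing A]

def altScale (v : Aˣ) : List A → List A
  | [] => []
  | a :: t => (v : A) * a :: altScale v⁻¹ t

/- For `l = a :: b :: t`, the factor `v` on `a` cancels the `v⁻¹` that `K(v⁻¹ b, …)` carries
exactly when `t` has even length; when `t` is odd, both terms carry the factor `v`. -/
theorem cont_altScale (v : Aˣ) (l : List A) :
    cont (altScale v l) = if Even l.length then cont l else (v : A) * cont l := by
  induction l using cont.induct generalizing v with
  | case1 => simp [altScale, cont]
  | case2 a => simp [altScale, cont]
  | case3 a b t ih_bt ih_t =>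
    have h_bt := ih_bt v⁻¹
    have h_t := ih_t v
    simp only [altScale, inv_inv] at h_bt h_t ⊢
    simp only [cont, h_bt, h_t, List.length_cons, Nat.even_add_one, not_not]
    by_cases ht : Even t.length
    · simp only [ht, if_true, not_true_eq_false, if_false]
      linear_combination (a * cont (b :: t)) * v.mul_inv
    · simp only [ht, if_false, not_false_eq_true, if_true]
      ring

theorem ofFn_alternating_mul_eq_altScale (v : Aˣ) {n : ℕ} (a : Fin n → A) :
    List.ofFn (fun i => (if (i : ℕ) % 2 = 0 then (v : A) else ((v⁻¹ : Aˣ) : A)) * a i)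
      = altScale v (List.ofFn a) := by
  induction n generalizing v with
  | zero => simp [altScale]
  | succ n ih =>
    rw [List.ofFn_succ, List.ofFn_succ, altScale, ← ih v⁻¹]
    congr 2
    funext i
    by_cases hi : (i : ℕ) % 2 = 0 <;> simp [Fin.val_succ, Nat.succ_mod_two_eq_zero_iff, hi]

end Quiddity

open Quiddity

/-- alternately scaling a tuple by `u, u⁻¹, u, u⁻¹, …` leaves the continuant
unchanged when the length is even, and multiplies it by `u` when the length is odd. -/
theorem stmt1 (A : Type*) [CommRing A] (u : Aˣ) :
    (∀ (l : ℕ) (a : Fin (2 * l) → A),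
      cont (List.ofFn fun i =>
          (if (i : ℕ) % 2 = 0 then (u : A) else ((u⁻¹ : Aˣ) : A)) * a i)
        = cont (List.ofFn a)) ∧
    (∀ (l : ℕ) (a : Fin (2 * l + 1) → A),
      cont (List.ofFn fun i =>
          (if (i : ℕ) % 2 = 0 then (u : A) else ((u⁻¹ : Aˣ) : A)) * a i)
        = (u : A) * cont (List.ofFn a)) := by
  refine ⟨fun l a => ?_, fun l a => ?_⟩ <;>
    rw [ofFn_alternating_mul_eq_altScale, cont_altScale] <;> simp [parity_simps]
end

section
/- Let A be a commutative unital ring, n ≥ 1 and (a_1,…,a_n) ∈ A^n such that K_n(a_1,…,a_n) = ε where ε = 1 or ε = −1. Set x := ε·K_{n−1}(a_2,…,a_n) and y := ε·K_{n−1}(a_1,…,a_{n−1}). Then M_{n+2}(x, a_1, …, a_n, y) = −ε·Id. -/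
/-!
`Mₙ(a₁,…,aₙ)` has determinant `1`, first row `(Kₙ(a₁,…,aₙ), -K_{n-1}(a₂,…,aₙ))` and first
column `(Kₙ(a₁,…,aₙ), K_{n-1}(a₁,…,a_{n-1}))`. When `Kₙ = ε` with `ε² = 1`, the two outer
factors with `x` and `y` clear the off-diagonal entries of this matrix, and the determinant
condition then forces both diagonal entries to be `-ε`.
-/

namespace Quiddity

variable {A : Type*} [CommRing A]

theorem mMat_append (s t : List A) : mMat (s ++ t) = mMat t * mMat s := by
  induction s with
  | nil => simp [mMat]
  | cons a s ih => simp [mMat, ih, Matrix.mul_assoc]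

theorem mMat_cons_append_singleton (x y : A) (l : List A) :
    mMat (x :: (l ++ [y])) = !![y, -1; 1, 0] * mMat l * !![x, -1; 1, 0] := by
  simp [mMat, mMat_append]

theorem det_mMat (l : List A) : (mMat l).det = 1 := by
  induction l with
  | nil => simp [mMat]
  | cons a t ih => simp [mMat, Matrix.det_mul, ih, Matrix.det_fin_two_of]

theorem mMat_zero_zero (l : List A) : mMat l 0 0 = cont l := by
  induction l using cont.induct with
  | case1 => simp [mMat, cont]
  | case2 a => simp [mMat, cont]
  | case3 a b t ih ih' =>
    have hrow : mMat (b :: t) 0 1 = -mMat t 0 0 := by simp [mMat, Matrix.mul_apply]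
    rw [mMat, Matrix.mul_apply, Fin.sum_univ_two, hrow, ih, ih', cont]
    simp only [Matrix.of_apply, Matrix.cons_val', Matrix.cons_val_zero, Matrix.cons_val_one,
      Matrix.cons_val_fin_one, Matrix.empty_val']
    ring

theorem mMat_zero_one {l : List A} (hl : l ≠ []) : mMat l 0 1 = -cont l.tail := by
  obtain ⟨a, t, rfl⟩ := List.exists_cons_of_ne_nil hl
  simp [mMat, Matrix.mul_apply, mMat_zero_zero]

theorem mMat_one_zero {l : List A} (hl : l ≠ []) : mMat l 1 0 = cont l.dropLast := by
  obtain ⟨t, b, rfl⟩ := List.eq_nil_or_concat l |>.resolve_left hl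
  simp [mMat_append, mMat, Matrix.mul_apply, mMat_zero_zero]

theorem mul_mul_eq_neg_smul_one_of_det_eq_one {ε p q : A} (hε : ε * ε = 1)
    {M : Matrix (Fin 2) (Fin 2) A} (hdet : M.det = 1) (h00 : M 0 0 = ε) (h01 : M 0 1 = -p)
    (h10 : M 1 0 = q) :
    !![ε * q, -1; 1, 0] * M * !![ε * p, -1; 1, 0] = (-ε) • (1 : Matrix (Fin 2) (Fin 2) A) := by
  rw [Matrix.det_fin_two, h00, h01, h10] at hdet
  rw [M.eta_fin_two, h00, h01, h10, Matrix.mul_fin_two, Matrix.mul_fin_two, Matrix.one_fin_two]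
  ext i j
  fin_cases i <;> fin_cases j <;>
    simp only [Fin.zero_eta, Fin.mk_one, Matrix.of_apply, Matrix.cons_val', Matrix.cons_val_zero,
      Matrix.cons_val_one, Matrix.cons_val_fin_one, Matrix.smul_apply, smul_eq_mul]
  · linear_combination (ε * q * p + M 1 1) * hε - ε * hdet
  · linear_combination -q * hε
  · linear_combination p * hε
  · ring

end Quiddity

open Quiddity

/-- if `Kₙ(a₁,…,aₙ) = ε = ±1`, setting `x := ε·K_{n−1}(a₂,…,aₙ)` and
`y := ε·K_{n−1}(a₁,…,a_{n−1})`, one has `M_{n+2}(x, a₁, …, aₙ, y) = −ε·Id`. -/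
theorem stmt3 (A : Type*) [CommRing A] (l : List A) (hl : 1 ≤ l.length)
    (ε : A) (hε : ε = 1 ∨ ε = -1) (h : cont l = ε) :
    mMat ((ε * cont l.tail) :: (l ++ [ε * cont l.dropLast]))
      = (-ε) • (1 : Matrix (Fin 2) (Fin 2) A) := by
  have hne : l ≠ [] := List.ne_nil_of_length_pos hl
  have hεε : ε * ε = 1 := by rcases hε with rfl | rfl <;> simp
  rw [mMat_cons_append_singleton]
  exact mul_mul_eq_neg_smul_one_of_det_eq_one hεε (det_mMat l) (mMat_zero_zero l ▸ h)
    (mMat_zero_one hne) (mMat_one_zero hne)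
end

section
/- Let K be a finite field, u a unit of K, m the size of the u-trinomial minimal solution over K, and o(u) the multiplicative order of u in K^*. Then: if K has characteristic 2, m = 3·o(u); if K has characteristic ≠ 2 and o(u) is even, m = 3·o(u)/2; if K has characteristic ≠ 2 and o(u) is odd, m = 3·o(u). -/
open Quiddity

/-! The matrix of one block `(u, v, v)` with `u v = 1` is upper triangular, so
`M_{3k}(u, v, v, …) = [[(-u)^k, ±v (u^k - v^k)], [0, (-v)^k]]`. In a domain this is `±Id` exactly
when `u^k = v^k`, i.e. `u^(2k) = 1`, i.e. `o(u) ∣ 2k`. The minimal `k` is therefore `o(u)/2` when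
`o(u)` is even and `o(u)` when it is odd; in characteristic 2 squaring is injective, so
`o(u) ∣ 2k` already forces `o(u) ∣ k`. -/

namespace Quiddity

theorem length_triList {A : Type*} [CommRing A] (k : ℕ) (a b : A) :
    (triList k a b).length = 3 * k := by
  induction k with
  | zero => rfl
  | succ k ih => simp only [triList, List.length_cons, ih]; ring

variable {A : Type*} [CommRing A]

theorem mMat_triList {u v : A} (huv : u * v = 1) (k : ℕ) :
    mMat (triList k u v) =
      !![(-u) ^ k, (-1) ^ (k + 1) * v * (u ^ k - v ^ k); 0, (-v) ^ k] := by
  induction k with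
  | zero => simp [triList, mMat, Matrix.one_fin_two]
  | succ k ih =>
    rw [triList, mMat, mMat, mMat, ih]
    simp only [Matrix.mul_fin_two]
    ext i j
    fin_cases i <;> fin_cases j <;>
      simp only [Matrix.of_apply, Matrix.cons_val', Matrix.cons_val_zero, Matrix.cons_val_one,
        Matrix.cons_val_fin_one, Fin.isValue, Fin.mk_one, Fin.zero_eta, neg_pow u, neg_pow v]
    · linear_combination (-1) ^ k * v ^ k * v * huv
    · linear_combination -(-1) ^ k * u ^ k * huv
    · linear_combination (-1) ^ k * v ^ k * huv
    · ring

theorem pow_eq_pow_iff_pow_two_mul_eq_one {u v : A} (huv : u * v = 1) (k : ℕ) :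
    u ^ k = v ^ k ↔ u ^ (2 * k) = 1 := by
  have huvk : u ^ k * v ^ k = 1 := by rw [← mul_pow, huv, one_pow]
  rw [two_mul, pow_add]
  constructor
  · intro h
    rw [← huvk, h]
  · intro h
    linear_combination v ^ k * h - u ^ k * huvk

variable [IsDomain A]

theorem isQuiddity_triList_iff {u v : A} (huv : u * v = 1) (k : ℕ) :
    IsQuiddity (triList k u v) ↔ u ^ (2 * k) = 1 := by
  have hv : v ≠ 0 := right_ne_zero_of_mul_eq_one huv
  rw [IsQuiddity, mMat_triList huv, ← pow_eq_pow_iff_pow_two_mul_eq_one huv]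
  simp only [Matrix.one_fin_two, EmbeddingLike.apply_eq_iff_eq, Matrix.vecCons_inj, mul_eq_zero,
    ne_eq, Nat.add_eq_zero_iff, one_ne_zero, and_false, not_false_eq_true, pow_eq_zero_iff,
    neg_eq_zero, hv, or_self, sub_eq_zero, false_or, and_true, true_and, Matrix.neg_of,
    Matrix.neg_cons, neg_zero, Matrix.neg_empty]
  constructor
  · rintro (⟨⟨-, h⟩, -⟩ | ⟨⟨-, h⟩, -⟩) <;> exact h
  · intro h
    have hsq : (-u) ^ k * (-v) ^ k = 1 := by rw [← mul_pow, neg_mul_neg, huv, one_pow]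
    rw [show (-v) ^ k = (-u) ^ k by rw [neg_pow, neg_pow u, h]] at hsq ⊢
    rcases mul_self_eq_one_iff.mp hsq with h1 | h1 <;> simp [h1, h]

theorem isQuiddity_triList_units_iff (u : Aˣ) (k : ℕ) :
    IsQuiddity (triList k (u : A) ↑u⁻¹) ↔ orderOf u ∣ 2 * k := by
  rw [isQuiddity_triList_iff u.mul_inv, orderOf_dvd_iff_pow_eq_one, ← Units.val_pow_eq_pow_val,
    Units.val_eq_one]

end Quiddity

theorem orderOf_dvd_of_dvd_two_mul_of_ringChar_eq_two {A : Type*} [CommRing A]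
    [NoZeroDivisors A] (h : ringChar A = 2) {u : Aˣ} {k : ℕ} (hu : orderOf u ∣ 2 * k) :
    orderOf u ∣ k := by
  have : CharP A 2 := ringChar.of_eq h
  rw [orderOf_dvd_iff_pow_eq_one, ← Units.val_eq_one, Units.val_pow_eq_pow_val] at hu ⊢
  apply CharTwo.sq_injective
  change ((u : A) ^ k) ^ 2 = 1 ^ 2
  rw [← pow_mul, mul_comm, hu, one_pow]

theorem stmt12_general (K : Type*) [Field K] (u : Kˣ) (k : ℕ) (hk : 0 < k)
    (hq : IsQuiddity (triList k (u : K) ((u⁻¹ : Kˣ) : K)))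
    (hmin : ∀ j, 0 < j → IsQuiddity (triList j (u : K) ((u⁻¹ : Kˣ) : K)) → k ≤ j) :
    (ringChar K = 2 →
      (triList k (u : K) ((u⁻¹ : Kˣ) : K)).length = 3 * orderOf u) ∧
    (ringChar K ≠ 2 → Even (orderOf u) →
      (triList k (u : K) ((u⁻¹ : Kˣ) : K)).length = 3 * orderOf u / 2) ∧
    (ringChar K ≠ 2 → Odd (orderOf u) →
      (triList k (u : K) ((u⁻¹ : Kˣ) : K)).length = 3 * orderOf u) := by
  simp only [isQuiddity_triList_units_iff] at hq hmin
  have hd : 0 < orderOf u := Nat.pos_of_dvd_of_pos hq (by omega)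
  have k_eq : orderOf u ∣ k → k = orderOf u := fun h ↦
    le_antisymm (hmin _ hd (dvd_mul_left _ 2)) (Nat.le_of_dvd hk h)
  rw [length_triList]
  refine ⟨fun hchar ↦ ?_, fun _ ⟨m, hm⟩ ↦ ?_, fun _ hodd ↦ ?_⟩
  · rw [k_eq (orderOf_dvd_of_dvd_two_mul_of_ringChar_eq_two hchar hq)]
  · have h₁ : k ≤ m := hmin m (by omega) (by rw [hm, two_mul])
    rw [hm, ← two_mul] at hq ⊢
    have h₂ : m ≤ k := Nat.le_of_dvd hk ((Nat.mul_dvd_mul_iff_left two_pos).1 hq)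
    omega
  · rw [k_eq ((Nat.coprime_two_right.2 hodd).dvd_mul_left.1 hq)]

/-- the size `m = 3k` of the `u`-trinomial minimal solution over a finite
field in terms of the multiplicative order of `u`. -/
theorem stmt12 (K : Type*) [Field K] [Fintype K] (u : Kˣ) (k : ℕ) (hk : 0 < k)
    (hq : IsQuiddity (triList k (u : K) ((u⁻¹ : Kˣ) : K)))
    (hmin : ∀ j, 0 < j → IsQuiddity (triList j (u : K) ((u⁻¹ : Kˣ) : K)) → k ≤ j) :
    (ringChar K = 2 →
      (triList k (u : K) ((u⁻¹ : Kˣ) : K)).length = 3 * orderOf u) ∧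
    (ringChar K ≠ 2 → Even (orderOf u) →
      (triList k (u : K) ((u⁻¹ : Kˣ) : K)).length = 3 * orderOf u / 2) ∧
    (ringChar K ≠ 2 → Odd (orderOf u) →
      (triList k (u : K) ((u⁻¹ : Kˣ) : K)).length = 3 * orderOf u) :=
  stmt12_general K u k hk hq hmin
end
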